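/- arXiv:2302.06537 — 3 statements merged into one kernel-verified Lean document; each statement's English description precedes it below -/
import Mathlib

section
/- Every symmetric matrix M over GF(2) with zero diagonal (the adjacency matrix of a graph G on n vertices) can be written as a symmetric difference (entrywise XOR, ignoring the diagonal) of at most rank_{GF(2)}(D ⊕ M) + 1 adjacency matrices of complete graphs on subsets of vertices, for any diagonal matrix D; in particular the minimum number t(G) of clique flips needed to realize G satisfies t(G) ≤ minrank₂(G) + 1, where minrank₂(G) = min over diagonal 0/1 matrices D of rank_{GF(2)}(D ⊕ G). -/
/-!
Over GF(2) the quadratic form `x ↦ xᵀ A x` of a symmetric matrix `A` is the linear form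
`x ↦ diag A ⬝ x`, since the off-diagonal terms cancel in pairs. If `diag A ≠ 0`, choose `x` with
`xᵀ A x = 1` and put `v = A x`; then `A + v vᵀ` has rank one less than `A` (Wedderburn's rank-one
reduction) and diagonal `diag A + v`. Either some such `x` keeps this diagonal nonzero, or
`A = diag A (diag A)ᵀ`; so inductively `A` is a sum of at most `rank A` squares `v vᵀ`.
If `diag A = 0`, adding one `eᵢ eᵢᵀ` makes the diagonal nonzero, raises the rank by at most
one and leaves the off-diagonal entries alone. For `A = D + M`, off the diagonal each square
`v vᵀ` is the complete graph on the support of `v`.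
-/

namespace Matrix

section Field

variable {K m n : Type*} [Field K] [Fintype n]

theorem rank_add_le (A B : Matrix m n K) : (A + B).rank ≤ A.rank + B.rank := by
  refine (Submodule.finrank_mono ?_).trans (Submodule.finrank_add_le_finrank_add_finrank _ _)
  rw [mulVecLin_add]
  exact LinearMap.range_add_le _ _

theorem rank_pos_of_ne_zero {A : Matrix m n K} (hA : A ≠ 0) : 0 < A.rank := by
  refine Nat.pos_of_ne_zero fun h => hA ?_
  rw [rank, Submodule.finrank_eq_zero, LinearMap.range_eq_bot] at h
  exact ext_iff_mulVec.mpr fun x => by simpa using LinearMap.congr_fun h x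

theorem rank_sub_smul_vecMulVec_lt [Fintype m] (A : Matrix m n K) {x : n → K} {y : m → K}
    (h : y ⬝ᵥ (A *ᵥ x) ≠ 0) :
    (A - (y ⬝ᵥ (A *ᵥ x))⁻¹ • vecMulVec (A *ᵥ x) (y ᵥ* A)).rank < A.rank := by
  set c := y ⬝ᵥ (A *ᵥ x)
  set A' := A - c⁻¹ • vecMulVec (A *ᵥ x) (y ᵥ* A)
  have hA' (z : n → K) : A' *ᵥ z = A *ᵥ (z - (c⁻¹ * (y ᵥ* A ⬝ᵥ z)) • x) := by
    rw [sub_mulVec, smul_mulVec, vecMulVec_mulVec, op_smul_eq_smul, mulVec_sub, mulVec_smul,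
      smul_smul]
  have hy (z : n → K) : y ⬝ᵥ (A' *ᵥ z) = 0 := by
    rw [hA', mulVec_sub, dotProduct_sub, mulVec_smul, dotProduct_smul, smul_eq_mul,
      dotProduct_mulVec, mul_right_comm, inv_mul_cancel₀ h, one_mul, sub_self]
  have hle : LinearMap.range A'.mulVecLin ≤ LinearMap.range A.mulVecLin := by
    rintro _ ⟨z, rfl⟩
    exact ⟨_, (hA' z).symm⟩
  have hAx : A *ᵥ x ∉ LinearMap.range A'.mulVecLin := by
    rintro ⟨z, hz⟩
    rw [mulVecLin_apply] at hz
    exact h (hz ▸ hy z : y ⬝ᵥ (A *ᵥ x) = 0)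
  exact Submodule.finrank_lt_finrank_of_lt
    (lt_of_le_of_ne hle fun heq => hAx (heq ▸ ⟨x, rfl⟩))

theorem eq_vecMulVec_of_mulVec_eq {A : Matrix m n K} {u : m → K} {w : n → K} (hw : w ≠ 0)
    (h : ∀ x, w ⬝ᵥ x = 1 → A *ᵥ x = u) : A = vecMulVec u w := by
  classical
  obtain ⟨i, hi⟩ := Function.ne_iff.mp hw
  set x₀ : n → K := Pi.single i (w i)⁻¹
  have hx₀ : w ⬝ᵥ x₀ = 1 := by simpa [x₀] using mul_inv_cancel₀ hi
  refine ext_iff_mulVec.mpr fun z => ?_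
  have hker : A *ᵥ (z - (w ⬝ᵥ z) • x₀) = 0 := by
    have := h (z - (w ⬝ᵥ z) • x₀ + x₀) (by simp [dotProduct_sub, hx₀])
    rwa [mulVec_add, h x₀ hx₀, add_eq_right] at this
  rw [mulVec_sub, mulVec_smul, h x₀ hx₀, sub_eq_zero] at hker
  rw [hker, vecMulVec_mulVec, op_smul_eq_smul]

end Field

theorem IsSymm.dotProduct_mulVec_self {R ι : Type*} [CommRing R] [CharP R 2] [Fintype ι]
    {A : Matrix ι ι R} (hA : A.IsSymm) (x : ι → R) :
    x ⬝ᵥ (A *ᵥ x) = ∑ i, A i i * x i ^ 2 := by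
  classical
  let Q : (ι → R) →+ R :=
    { toFun := fun x => x ⬝ᵥ (A *ᵥ x)
      map_zero' := zero_dotProduct _
      map_add' := fun x y => by
        have hxy : y ⬝ᵥ (A *ᵥ x) = x ⬝ᵥ (A *ᵥ y) := by
          rw [dotProduct_mulVec, dotProduct_comm, ← mulVec_transpose, hA.eq]
        simp only [mulVec_add, add_dotProduct, dotProduct_add, hxy]
        linear_combination (x ⬝ᵥ (A *ᵥ y)) * CharTwo.two_eq_zero (R := R) }
  calc x ⬝ᵥ (A *ᵥ x) = Q (∑ i, Pi.single i (x i)) := by rw [Finset.univ_sum_single]; rfl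
    _ = ∑ i, A i i * x i ^ 2 := by
      rw [map_sum]
      refine Finset.sum_congr rfl fun i _ => ?_
      simp [Q, mulVec_single]
      ring

section ZModTwo

variable {ι : Type*} [Fintype ι]

theorem IsSymm.dotProduct_mulVec_self_eq_diag_dotProduct {A : Matrix ι ι (ZMod 2)}
    (hA : A.IsSymm) (x : ι → ZMod 2) : x ⬝ᵥ (A *ᵥ x) = A.diag ⬝ᵥ x := by
  rw [hA.dotProduct_mulVec_self]
  simp [dotProduct, ZMod.pow_card]

theorem IsSymm.rank_add_vecMulVec_mulVec_lt {A : Matrix ι ι (ZMod 2)} (hA : A.IsSymm)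
    {x : ι → ZMod 2} (hx : x ⬝ᵥ (A *ᵥ x) = 1) :
    (A + vecMulVec (A *ᵥ x) (A *ᵥ x)).rank < A.rank := by
  have hxA : x ᵥ* A = A *ᵥ x := by rw [← vecMul_transpose, hA.eq]
  simpa [hx, hxA, ZModModule.sub_eq_add] using
    A.rank_sub_smul_vecMulVec_lt (x := x) (y := x) (by simp [hx])

theorem IsSymm.exists_eq_sum_vecMulVec_self {A : Matrix ι ι (ZMod 2)} (hA : A.IsSymm)
    (hd : A.diag ≠ 0) :
    ∃ (m : ℕ) (v : Fin m → ι → ZMod 2), m ≤ A.rank ∧ A = ∑ t, vecMulVec (v t) (v t) := by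
  induction hr : A.rank using Nat.strong_induction_on generalizing A with
  | _ r ih =>
    by_cases hpivot : ∃ x, A.diag ⬝ᵥ x = 1 ∧ A *ᵥ x ≠ A.diag
    · obtain ⟨x, hx, hne⟩ := hpivot
      have hlt := hA.rank_add_vecMulVec_mulVec_lt
        ((hA.dotProduct_mulVec_self_eq_diag_dotProduct x).trans hx)
      set v := A *ᵥ x
      have hd' : (A + vecMulVec v v).diag ≠ 0 := by
        have hvv : v * v = v := funext fun i => by simpa [sq] using ZMod.pow_card (v i)
        rw [diag_add, diag_vecMulVec, hvv, Ne, add_eq_zero_iff_eq_neg, ZModModule.neg_eq_self]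
        exact hne.symm
      obtain ⟨m, w, hm, hw⟩ := ih _ (hr ▸ hlt) (hA.add (transpose_vecMulVec v v)) hd' rfl
      refine ⟨m + 1, Fin.cons v w, by omega, ?_⟩
      rw [Fin.sum_univ_succ, Fin.cons_zero]
      simp only [Fin.cons_succ, ← hw]
      rw [add_left_comm, ZModModule.add_self, add_zero]
    · push Not at hpivot
      have hpos : 0 < r := hr ▸ rank_pos_of_ne_zero fun h => hd (by simp [h])
      exact ⟨1, fun _ => A.diag, hpos, by simpa using eq_vecMulVec_of_mulVec_eq hd hpivot⟩

theorem IsSymm.exists_offDiag_eq_sum_vecMulVec_self {A : Matrix ι ι (ZMod 2)}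
    (hA : A.IsSymm) : ∃ (m : ℕ) (v : Fin m → ι → ZMod 2), m ≤ A.rank + 1 ∧
      ∀ i j, i ≠ j → A i j = (∑ t, vecMulVec (v t) (v t)) i j := by
  by_cases hd : A.diag = 0
  · rcases isEmpty_or_nonempty ι with hι | ⟨⟨i⟩⟩
    · exact ⟨0, Fin.elim0, Nat.zero_le _, fun i => isEmptyElim i⟩
    classical
    set e : ι → ZMod 2 := Pi.single i 1
    have hd' : (A + vecMulVec e e).diag ≠ 0 := fun h => by
      simpa [e, vecMulVec_apply, show A i i = 0 from congr_fun hd i] using congr_fun h i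
    obtain ⟨m, v, hm, hv⟩ := (hA.add (transpose_vecMulVec e e)).exists_eq_sum_vecMulVec_self hd'
    refine ⟨m, v, hm.trans ((rank_add_le _ _).trans (by gcongr; exact rank_vecMulVec_le e e)),
      fun j k hjk => ?_⟩
    rw [← hv]
    simp [e, vecMulVec_apply, Pi.single_apply]
    rintro rfl rfl
    exact hjk rfl
  · obtain ⟨m, v, hm, hv⟩ := hA.exists_eq_sum_vecMulVec_self hd
    exact ⟨m, v, hm.trans (Nat.le_succ _), fun i j _ => by rw [← hv]⟩

end ZModTwo

end Matrix

theorem clique_flip_upper_bound_general (n : ℕ) (M D : Matrix (Fin n) (Fin n) (ZMod 2))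
    (hsymm : M.IsSymm) (hD : D.IsDiag) :
    ∃ (m : ℕ) (S : Fin m → Finset (Fin n)),
      m ≤ (D + M).rank + 1 ∧
      ∀ i j : Fin n, i ≠ j →
        M i j = ∑ t : Fin m, (if i ∈ S t ∧ j ∈ S t then (1 : ZMod 2) else 0) := by
  obtain ⟨m, v, hm, hv⟩ := (hD.isSymm.add hsymm).exists_offDiag_eq_sum_vecMulVec_self
  refine ⟨m, fun t => {i | v t i = 1}, hm, fun i j hij => ?_⟩
  have hmul (a b : ZMod 2) : a * b = if a = 1 ∧ b = 1 then 1 else 0 := by decide +revert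
  have hMij : M i j = (D + M) i j := by simp [hD hij]
  rw [hMij, hv i j hij, Matrix.sum_apply]
  simp [Matrix.vecMulVec_apply, hmul]

/-- Every symmetric zero-diagonal matrix `M` over GF(2) (adjacency matrix of a
graph) can be written, off the diagonal, as the entrywise XOR of at most
`rank (D + M) + 1` adjacency matrices of complete graphs on vertex subsets, for any
diagonal 0/1 matrix `D`.  In particular `t(G) ≤ minrank₂(G) + 1`. -/
theorem clique_flip_upper_bound (n : ℕ) (M D : Matrix (Fin n) (Fin n) (ZMod 2))
    (hsymm : M.IsSymm) (hdiag : ∀ i, M i i = 0) (hD : D.IsDiag) :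
    ∃ (m : ℕ) (S : Fin m → Finset (Fin n)),
      m ≤ (D + M).rank + 1 ∧
      ∀ i j : Fin n, i ≠ j →
        M i j = ∑ t : Fin m, (if i ∈ S t ∧ j ∈ S t then (1 : ZMod 2) else 0) :=
  clique_flip_upper_bound_general n M D hsymm hD
end

section
/- Every graph G on n vertices can be written as the symmetric difference of at most n−1 edge sets of cliques: there exist vertex subsets S₁,…,S_{n−1} such that the edge set of G is the symmetric difference of the edge sets of the complete graphs on S₁,…,S_{n−1}. -/
open Finset

/-- Edge set of the complete graph on the vertex subset `S ⊆ Fin n`. -/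
def cliqueEdges (n : ℕ) (S : Finset (Fin n)) : Finset (Sym2 (Fin n)) :=
  ((S ×ˢ S).filter fun p => p.1 ≠ p.2).image fun p => s(p.1, p.2)

lemma mem_cliqueEdges {n : ℕ} (S : Finset (Fin n)) (a b : Fin n) :
    s(a, b) ∈ cliqueEdges n S ↔ a ∈ S ∧ b ∈ S ∧ a ≠ b := by
  simp only [cliqueEdges, mem_image, mem_filter, mem_product, Sym2.eq_iff]
  constructor
  · rintro ⟨⟨x, y⟩, ⟨⟨hx, hy⟩, hne⟩, h⟩
    rcases h with ⟨rfl, rfl⟩ | ⟨rfl, rfl⟩ <;> simp_all <;> tauto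
  · rintro ⟨ha, hb, hne⟩
    exact ⟨(a, b), ⟨⟨ha, hb⟩, hne⟩, Or.inl ⟨rfl, rfl⟩⟩

lemma cliqueEdges_not_isDiag {n : ℕ} {S : Finset (Fin n)} {e : Sym2 (Fin n)}
    (he : e ∈ cliqueEdges n S) : ¬ e.IsDiag := by
  induction e using Sym2.inductionOn with
  | hf a b =>
    rw [mem_cliqueEdges] at he
    simpa using he.2.2

/-- `v` together with its neighbors in `G`. -/
def nbr (n : ℕ) (G : Finset (Sym2 (Fin n))) (v : Fin n) : Finset (Fin n) :=
  insert v (Finset.univ.filter fun u => s(v, u) ∈ G)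

/-- residual graph after processing vertices `0, …, i-1`. -/
def resid (n : ℕ) (G0 : Finset (Sym2 (Fin n))) : ℕ → Finset (Sym2 (Fin n))
  | 0 => G0
  | (i + 1) =>
      let G := resid n G0 i
      if h : i < n then symmDiff G (cliqueEdges n (nbr n G ⟨i, h⟩)) else G

def Sfun (n : ℕ) (G0 : Finset (Sym2 (Fin n))) (i : ℕ) : Finset (Fin n) :=
  if h : i < n then nbr n (resid n G0 i) ⟨i, h⟩ else ∅

lemma resid_succ (n : ℕ) (G0 : Finset (Sym2 (Fin n))) (i : ℕ) :
    resid n G0 (i + 1) = symmDiff (resid n G0 i) (cliqueEdges n (Sfun n G0 i)) := by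
  rw [resid, Sfun]
  split
  · rfl
  · simp [cliqueEdges, symmDiff]

lemma resid_not_isDiag (n : ℕ) (G0 : Finset (Sym2 (Fin n)))
    (hG : ∀ e ∈ G0, ¬ e.IsDiag) (i : ℕ) : ∀ e ∈ resid n G0 i, ¬ e.IsDiag := by
  induction i with
  | zero => exact hG
  | succ i ih =>
    intro e he
    rw [resid_succ, Finset.mem_symmDiff] at he
    rcases he with ⟨h, _⟩ | ⟨h, _⟩
    · exact ih e h
    · exact cliqueEdges_not_isDiag h

lemma resid_isolated (n : ℕ) (G0 : Finset (Sym2 (Fin n)))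
    (hG : ∀ e ∈ G0, ¬ e.IsDiag) (i : ℕ) :
    ∀ j : Fin n, (j : ℕ) < i → ∀ u : Fin n, s(j, u) ∉ resid n G0 i := by
  induction i with
  | zero => intro j hj; omega
  | succ i ih =>
    intro j hj u
    rw [resid_succ, Finset.mem_symmDiff]
    by_cases hin : i < n
    · have hSf : Sfun n G0 i = nbr n (resid n G0 i) ⟨i, hin⟩ := by
        rw [Sfun, dif_pos hin]
      rcases Nat.lt_or_ge (j : ℕ) i with hji | hji
      · -- j already isolated; j ∉ S
        have hjS : j ∉ Sfun n G0 i := by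
          rw [hSf, nbr]
          simp only [Finset.mem_insert, Finset.mem_filter, Finset.mem_univ, true_and]
          rintro (rfl | hmem)
          · simp at hji
          · exact ih j hji ⟨i, hin⟩ (by rw [Sym2.eq_swap] at hmem; exact hmem)
        have hnc : s(j, u) ∉ cliqueEdges n (Sfun n G0 i) := by
          rw [mem_cliqueEdges]; tauto
        have hng := ih j hji u
        tauto
      · -- j = i : freshly eliminated
        have hji' : (j : ℕ) = i := by omega
        have hjv : j = ⟨i, hin⟩ := Fin.ext hji'
        subst hjv
        set v : Fin n := ⟨i, hin⟩
        by_cases huv : u = v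
        · subst huv
          have hd : s(v, v) ∉ resid n G0 i := fun h =>
            resid_not_isDiag n G0 hG i _ h (by simp)
          have hc : s(v, v) ∉ cliqueEdges n (Sfun n G0 i) := fun h =>
            cliqueEdges_not_isDiag h (by simp)
          tauto
        · have hiff : s(v, u) ∈ cliqueEdges n (Sfun n G0 i) ↔ s(v, u) ∈ resid n G0 i := by
            rw [mem_cliqueEdges, hSf, nbr]
            constructor
            · rintro ⟨-, hu, hne⟩
              rcases Finset.mem_insert.mp hu with rfl | hu
              · exact absurd rfl hne
              · exact (Finset.mem_filter.mp hu).2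
            · intro h
              exact ⟨Finset.mem_insert_self _ _,
                Finset.mem_insert_of_mem
                  (Finset.mem_filter.mpr ⟨Finset.mem_univ _, h⟩),
                fun hvu => huv hvu.symm⟩
          tauto
    · have hji : (j : ℕ) < i := by have := j.isLt; omega
      have hS : Sfun n G0 i = ∅ := by rw [Sfun, dif_neg hin]
      have hng := ih j hji u
      rw [hS]
      simp [cliqueEdges, hng]

lemma resid_final (n : ℕ) (G0 : Finset (Sym2 (Fin n)))
    (hG : ∀ e ∈ G0, ¬ e.IsDiag) : resid n G0 (n - 1) = ∅ := by
  ext e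
  simp only [Finset.notMem_empty, iff_false]
  intro he
  induction e using Sym2.inductionOn with
  | hf a b =>
    have hne : a ≠ b := by
      intro h; exact resid_not_isDiag n G0 hG _ _ he (by simp [h])
    have hne' : (a : ℕ) ≠ (b : ℕ) := fun h => hne (Fin.ext h)
    have ha := a.isLt
    have hb := b.isLt
    rcases Nat.lt_or_ge (a : ℕ) (n - 1) with h | h
    · exact resid_isolated n G0 hG (n - 1) a h b he
    · have hb' : (b : ℕ) < n - 1 := by omega
      exact resid_isolated n G0 hG (n - 1) b hb' a (by rw [Sym2.eq_swap]; exact he)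

lemma resid_parity (n : ℕ) (G0 : Finset (Sym2 (Fin n))) (i : ℕ) (e : Sym2 (Fin n)) :
    (e ∈ resid n G0 i ↔
      (e ∈ G0 ↔ ¬ Odd (((Finset.range i).filter
        fun j => e ∈ cliqueEdges n (Sfun n G0 j)).card)) ) := by
  induction i with
  | zero => simp [resid]
  | succ i ih =>
    rw [resid_succ, Finset.mem_symmDiff, Finset.range_add_one, Finset.filter_insert]
    by_cases hc : e ∈ cliqueEdges n (Sfun n G0 i)
    · rw [if_pos hc, Finset.card_insert_of_notMem (by simp)]
      rw [Nat.odd_add_one]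
      tauto
    · rw [if_neg hc]
      tauto

/-- every graph on `n` vertices is the symmetric difference of at most
`n - 1` clique edge sets: an edge lies in `G` iff it lies in an odd number of the
cliques `K_{S₁}, …, K_{S_{n-1}}`. -/
theorem graph_eq_symmDiff_of_cliques (n : ℕ) (G : Finset (Sym2 (Fin n)))
    (hG : ∀ e ∈ G, ¬ e.IsDiag) :
    ∃ S : Fin (n - 1) → Finset (Fin n),
      ∀ e : Sym2 (Fin n),
        (e ∈ G ↔ Odd (Finset.univ.filter fun i => e ∈ cliqueEdges n (S i)).card) := by
  refine ⟨fun i => Sfun n G i.val, fun e => ?_⟩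
  have h1 := resid_parity n G (n - 1) e
  have h2 : e ∉ resid n G (n - 1) := by rw [resid_final n G hG]; simp
  have h3 : (Finset.univ.filter fun i : Fin (n - 1) =>
        e ∈ cliqueEdges n (Sfun n G i.val)).card
      = ((Finset.range (n - 1)).filter fun j => e ∈ cliqueEdges n (Sfun n G j)).card := by
    rw [Finset.card_filter, Finset.card_filter,
      Fin.sum_univ_eq_sum_range (fun j => if e ∈ cliqueEdges n (Sfun n G j) then 1 else 0)]
  rw [h3]
  tauto
end

section
/- Every invertible n×n matrix M over GF(2) can be reduced to a permutation matrix by a sequence of n 'fan-out' operations, where the i-th fan-out adds (mod 2) the i-th column c_i simultaneously to all other columns c_j having a 1 in row σ_i, with σ_i the index of the first nonzero entry of c_i at that stage. Consequently, M equals a permutation matrix times a product of n such fan-out column operations. -/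
/-!
Process the columns one at a time. For column `c` pick any row `r` with a `1` in it (invertibility
guarantees one); the fan-out from `c` to the other columns with a `1` in row `r` turns row `r` into
the unit vector `e_c` and leaves every row with a `0` in column `c` unchanged, in particular the rows
already turned into `e_j` for earlier columns `j`. At the end every `e_j` is a row, so the matrix is a
permutation matrix. A fan-out is `1 + N` with `N ^ 2 = 0`, hence an involution over `GF(2)`, so
undoing the fan-outs expresses `M` as the permutation matrix times the same fan-outs in reverse order.
-/

def fanoutMatrix (n : ℕ) (c : Fin n) (T : Finset (Fin n)) : Matrix (Fin n) (Fin n) (ZMod 2) :=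
  1 + ∑ j ∈ T, Matrix.single c j 1

open Matrix

theorem ZMod.eq_zero_or_eq_one (x : ZMod 2) : x = 0 ∨ x = 1 := by
  revert x
  decide

theorem List.exists_ofFn_eq {α : Type*} {L : List α} {n : ℕ} (h : L.length = n) :
    ∃ f : Fin n → α, List.ofFn f = L := by
  subst h
  exact ⟨_, List.ofFn_getElem⟩

theorem exists_perm_eq_of_forall_exists_row_eq_single {ι R : Type*} [Fintype ι] [DecidableEq ι]
    [Zero R] [One R] [NeZero (1 : R)] {A : Matrix ι ι R} (h : ∀ j, ∃ r, A r = Pi.single j 1) :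
    ∃ σ : Equiv.Perm ι, A = of fun i j => if σ j = i then 1 else 0 := by
  choose s hs using h
  have hinj : Function.Injective s := fun j k hjk => by
    by_contra hne
    have := congr_fun ((hs j).symm.trans (hjk ▸ hs k)) j
    rw [Pi.single_eq_same, Pi.single_eq_of_ne hne] at this
    exact one_ne_zero this
  refine ⟨Equiv.ofBijective s hinj.bijective_of_finite, ?_⟩
  ext a b
  obtain ⟨j, rfl⟩ := (Equiv.ofBijective s hinj.bijective_of_finite).surjective a
  simp [hs, Pi.single_apply, hinj.eq_iff]

section

variable {n : ℕ}

theorem fanoutMatrix_mul_self {c : Fin n} {T : Finset (Fin n)} (hc : c ∉ T) :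
    fanoutMatrix n c T * fanoutMatrix n c T = 1 := by
  set N : Matrix (Fin n) (Fin n) (ZMod 2) := ∑ j ∈ T, single c j 1
  have hN : N * N = 0 := by
    simp only [N, Finset.sum_mul_sum]
    refine Finset.sum_eq_zero fun j hj => Finset.sum_eq_zero fun k _ => ?_
    exact single_mul_single_of_ne (1 : ZMod 2) c j c (ne_of_mem_of_not_mem hj hc) 1
  have h2N : N + N = 0 := by
    ext
    exact CharTwo.add_self_eq_zero _
  calc (1 + N) * (1 + N) = 1 + (N + N) + N * N := by noncomm_ring
    _ = 1 := by rw [h2N, hN, add_zero, add_zero]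

theorem mul_fanoutMatrix_apply (A : Matrix (Fin n) (Fin n) (ZMod 2)) (c : Fin n)
    (T : Finset (Fin n)) (a b : Fin n) :
    (A * fanoutMatrix n c T) a b = A a b + if b ∈ T then A a c else 0 := by
  simp only [fanoutMatrix, mul_add, Matrix.mul_sum, mul_one, Matrix.add_apply, Matrix.sum_apply]
  congr 1
  split_ifs with hb
  · rw [Finset.sum_eq_single_of_mem b hb fun j _ hjb => mul_single_apply_of_ne _ _ _ _ _ hjb.symm _]
    simp
  · exact Finset.sum_eq_zero fun j hj =>
      mul_single_apply_of_ne _ _ _ _ _ (ne_of_mem_of_not_mem hj hb).symm _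

theorem mul_fanoutMatrix_row_of_apply_eq_zero {A : Matrix (Fin n) (Fin n) (ZMod 2)} {c a : Fin n}
    (T : Finset (Fin n)) (h : A a c = 0) : (A * fanoutMatrix n c T) a = A a := by
  ext b
  simp [mul_fanoutMatrix_apply, h]

theorem mul_fanoutMatrix_pivot_row {A : Matrix (Fin n) (Fin n) (ZMod 2)} {c r : Fin n}
    (h : A r c = 1) :
    (A * fanoutMatrix n c {j | j ≠ c ∧ A r j = 1}) r = Pi.single c 1 := by
  ext b
  rw [mul_fanoutMatrix_apply, h, Pi.single_apply]
  rcases eq_or_ne b c with rfl | hbc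
  · simp [h]
  · rcases ZMod.eq_zero_or_eq_one (A r b) with hb | hb
    · simp [hbc, hb]
    · simp [hbc, hb, CharTwo.add_self_eq_zero]

theorem exists_apply_eq_one_of_isUnit_det {A : Matrix (Fin n) (Fin n) (ZMod 2)}
    (hA : IsUnit A.det) (c : Fin n) : ∃ r, A r c = 1 := by
  by_contra! h
  exact hA.ne_zero <|
    det_eq_zero_of_column_eq_zero c fun r => (ZMod.eq_zero_or_eq_one _).resolve_right (h r)

theorem exists_eq_perm_mul_fanouts_of_forall_notMem (S : Finset (Fin n))
    {A : Matrix (Fin n) (Fin n) (ZMod 2)} (hA : IsUnit A.det)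
    (hS : ∀ j ∉ S, ∃ r, A r = Pi.single j 1) :
    ∃ (σ : Equiv.Perm (Fin n)) (L : List (Fin n × Finset (Fin n))),
      L.length = S.card ∧ (∀ p ∈ L, p.1 ∉ p.2) ∧
      A = of (fun i j => if σ j = i then 1 else 0) * (L.map fun p => fanoutMatrix n p.1 p.2).prod := by
  induction S using Finset.induction_on generalizing A with
  | empty =>
    obtain ⟨σ, hσ⟩ := exists_perm_eq_of_forall_exists_row_eq_single fun j => hS j (by simp)
    exact ⟨σ, [], rfl, by simp, by simp [hσ]⟩
  | insert c S hcS ih =>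
    obtain ⟨r, hr⟩ := exists_apply_eq_one_of_isUnit_det hA c
    set T : Finset (Fin n) := {j | j ≠ c ∧ A r j = 1}
    have hcT : c ∉ T := by simp [T]
    have hFF := fanoutMatrix_mul_self hcT
    have hAF : IsUnit (A * fanoutMatrix n c T).det := by
      rw [det_mul]
      exact hA.mul (isUnit_det_of_left_inverse hFF)
    have hSF : ∀ j ∉ S, ∃ r, (A * fanoutMatrix n c T) r = Pi.single j 1 := by
      intro j hj
      rcases eq_or_ne j c with rfl | hjc
      · exact ⟨r, mul_fanoutMatrix_pivot_row hr⟩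
      · obtain ⟨r', hr'⟩ := hS j (by simp [hjc, hj])
        refine ⟨r', ?_⟩
        rw [mul_fanoutMatrix_row_of_apply_eq_zero T (by rw [hr', Pi.single_eq_of_ne hjc.symm]), hr']
    obtain ⟨σ, L, hlen, hL, hAL⟩ := ih hAF hSF
    refine ⟨σ, L ++ [(c, T)], by simp [hlen, hcS], ?_, ?_⟩
    · simp only [List.mem_append, List.mem_singleton]
      rintro p (hp | rfl)
      exacts [hL p hp, hcT]
    calc A = A * fanoutMatrix n c T * fanoutMatrix n c T := by rw [Matrix.mul_assoc, hFF, mul_one]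
      _ = _ := by rw [hAL]; simp [Matrix.mul_assoc]

end

/-- any invertible matrix over GF(2) can be reduced to a permutation matrix
by `n` fan-out column operations; equivalently, `M` equals a permutation matrix times a
product of `n` fan-out column-operation matrices. -/
theorem invertible_eq_perm_mul_fanouts (n : ℕ) (M : Matrix (Fin n) (Fin n) (ZMod 2))
    (hM : IsUnit M.det) :
    ∃ (σ : Equiv.Perm (Fin n)) (c : Fin n → Fin n) (T : Fin n → Finset (Fin n)),
      (∀ i, c i ∉ T i) ∧
      M = Matrix.of (fun i j : Fin n => if σ j = i then (1 : ZMod 2) else 0) *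
            (List.ofFn fun i : Fin n => fanoutMatrix n (c i) (T i)).prod := by
  obtain ⟨σ, L, hlen, hL, hML⟩ :=
    exists_eq_perm_mul_fanouts_of_forall_notMem Finset.univ hM (by simp)
  obtain ⟨f, rfl⟩ := List.exists_ofFn_eq (hlen.trans (Finset.card_fin n))
  refine ⟨σ, fun i => (f i).1, fun i => (f i).2, fun i => hL _ (List.mem_ofFn.2 ⟨i, rfl⟩), ?_⟩
  rw [hML, List.map_ofFn]
  rfl
end
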